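/- For every seed set S ⊆ V there exists a distribution θ* ∈ Θ with E_{θ*}[R(c̃, S)] = |S| + Σ_{i ∈ V \ S} π*_i; consequently the correlation robust influence function admits the closed form f^corr(S) = |S| + Σ_{i ∈ V \ S} π*_i. -/

import Mathlib

open scoped BigOperators

namespace CorrIM

variable {V : Type*} [Fintype V] [DecidableEq V]

/-- A node `i` is influenced: `i ∈ S`, or `i` is reachable from some node of `S`
along the live edges of the scenario `c`. -/
def influenced (c : Finset (V × V)) (S : Finset V) (i : V) : Prop :=
  ∃ s ∈ S, Relation.ReflTransGen (fun a b : V => (a, b) ∈ c) s i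

/-- `R c S` : the number of influenced nodes in scenario `c` with seed set `S`. -/
noncomputable def R (c : Finset (V × V)) (S : Finset V) : ℕ :=
  Set.ncard {i : V | influenced c S i}

/-- The Fréchet class `Θ` : probability distributions on scenarios (subsets of `E`)
whose marginals agree with the edge likelihoods `p`. -/
def memTheta (E : Finset (V × V)) (p : V × V → ℝ) (θ : Finset (V × V) → ℝ) : Prop :=
  (∀ c, 0 ≤ θ c) ∧ (∀ c, θ c ≠ 0 → c ⊆ E) ∧ (∑ c : Finset (V × V), θ c) = 1 ∧
    ∀ e ∈ E, (∑ c : Finset (V × V), if e ∈ c then θ c else 0) = p e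

/-- Expected number of influenced nodes under the distribution `θ`. -/
noncomputable def expInf (θ : Finset (V × V) → ℝ) (S : Finset V) : ℝ :=
  ∑ c : Finset (V × V), θ c * (R c S : ℝ)

/-- The correlation robust influence function `f^corr`. -/
noncomputable def fcorr (E : Finset (V × V)) (p : V × V → ℝ) (S : Finset V) : ℝ :=
  sInf {x : ℝ | ∃ θ, memTheta E p θ ∧ x = expInf θ S}

open Classical in
/-- Probability of the event `A` under the distribution `θ`. -/
noncomputable def prob (θ : Finset (V × V) → ℝ) (A : Finset (V × V) → Prop) : ℝ :=
  ∑ c : Finset (V × V), if A c then θ c else 0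

/-- `γ` (a list of nodes `i₀, i₁, …, i_λ`, `λ ≥ 1`) is a directed path from the
seed set `S` to the node `i` using edges of `E`. -/
def IsPathFrom (E : Finset (V × V)) (S : Finset V) (i : V) (γ : List V) : Prop :=
  2 ≤ γ.length ∧ (∃ s ∈ S, γ.head? = some s) ∧ γ.getLast? = some i ∧
    γ.Chain' (fun a b : V => (a, b) ∈ E)

/-- The list of edges `(i₀,i₁), …, (i_{λ-1}, i_λ)` of a path `γ = [i₀, …, i_λ]`. -/
def pathEdges (γ : List V) : List (V × V) := γ.zip γ.tail

/-- The weight `L(γ) = 1 - ∑_{l=1}^{λ} (1 - p(i_{l-1}, i_l))` of a path. -/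
noncomputable def L (p : V × V → ℝ) (γ : List V) : ℝ :=
  1 - ((pathEdges γ).map (fun e => 1 - p e)).sum

/-- `π*_i = max(0, max_{γ ∈ Γ(S,i)} L(γ))`, with value `0` when `Γ(S,i) = ∅`. -/
noncomputable def piStar (E : Finset (V × V)) (p : V × V → ℝ) (S : Finset V) (i : V) : ℝ :=
  sSup (insert 0 {x : ℝ | ∃ γ : List V, IsPathFrom E S i γ ∧ x = L p γ})

/-- The independent cascade distribution `θ_ic` : each edge of `E` is live
independently with probability `p e`. -/
noncomputable def thetaIC (E : Finset (V × V)) (p : V × V → ℝ) (c : Finset (V × V)) : ℝ :=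
  if c ⊆ E then (∏ e ∈ c, p e) * ∏ e ∈ E \ c, (1 - p e) else 0

/-- The independent cascade influence function `f^ic`. -/
noncomputable def fic (E : Finset (V × V)) (p : V × V → ℝ) (S : Finset V) : ℝ :=
  expInf (thetaIC E p) S

/-!
Write `π_i` for `π*_i`, extended by `π_s = 1` on the seeds.

For any `θ ∈ Θ`, a node `i` is influenced as soon as every edge of one path `γ` from `S` to
`i` is live, which by the union bound happens with probability at least `L(γ)`. Hence
`P_θ(i influenced) ≥ π_i`, and summing over `i` gives `E_θ[R] ≥ |S| + ∑_{i ∉ S} π*_i`.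

For the minimiser, draw `t` uniformly from `[0, 1)` and declare the edge `(u, v)` dead on a
window of length `1 - p(u, v)` which, below `π_u`, is `[π_u - (1 - p(u, v)), π_u)`. The
Bellman inequality `π_u - (1 - p(u, v)) ≤ π_v` shows that at time `t` exactly the nodes with
`t < π_i` are influenced, so the expected number of influenced nodes is `∑_i π_i`.
-/

open MeasureTheory Set

section Paths

omit [Fintype V] [DecidableEq V]

variable {E : Finset (V × V)} {p : V × V → ℝ} {S : Finset V}

@[simp] lemma pathEdges_nil : pathEdges ([] : List V) = [] := rfl

@[simp] lemma pathEdges_singleton (a : V) : pathEdges [a] = [] := rfl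

@[simp] lemma pathEdges_cons_cons (a b : V) (l : List V) :
    pathEdges (a :: b :: l) = (a, b) :: pathEdges (b :: l) := rfl

lemma isChain_iff_forall_mem_pathEdges {r : V → V → Prop} :
    ∀ {γ : List V}, γ.IsChain r ↔ ∀ e ∈ pathEdges γ, r e.1 e.2
  | [] | [_] => by simp
  | a :: b :: l => by
    simp [List.isChain_cons_cons, isChain_iff_forall_mem_pathEdges (γ := b :: l)]

lemma pathEdges_append_singleton {u : V} (v : V) :
    ∀ {γ : List V}, γ.getLast? = some u → pathEdges (γ ++ [v]) = pathEdges γ ++ [(u, v)]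
  | [], h => by simp at h
  | [a], h => by simp_all
  | a :: b :: l, h => by
    simp only [List.cons_append, pathEdges_cons_cons]
    rw [← List.cons_append, pathEdges_append_singleton v (γ := b :: l) (by simpa using h)]

lemma L_cons_cons (a b : V) (l : List V) :
    L p (a :: b :: l) = L p (b :: l) - (1 - p (a, b)) := by
  simp only [L, pathEdges_cons_cons, List.map_cons, List.sum_cons]; ring

lemma L_append_singleton {γ : List V} {u : V} (v : V) (hu : γ.getLast? = some u) :
    L p (γ ++ [v]) = L p γ - (1 - p (u, v)) := by
  simp only [L, pathEdges_append_singleton v hu, List.map_append, List.map_cons, List.map_nil,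
    List.sum_append, List.sum_cons, List.sum_nil]
  ring

lemma L_le_one (hp : ∀ e ∈ E, 0 ≤ p e ∧ p e ≤ 1) {γ : List V}
    (hγ : γ.IsChain fun a b => (a, b) ∈ E) : L p γ ≤ 1 := by
  rw [isChain_iff_forall_mem_pathEdges] at hγ
  have : ∀ e ∈ pathEdges γ, 0 ≤ 1 - p e := fun e he => by linarith [(hp e (hγ e he)).2]
  have := List.sum_nonneg (List.forall_mem_map.2 this)
  rw [L]; linarith

lemma IsPathFrom.isChain {i : V} {γ : List V} (hγ : IsPathFrom E S i γ) :
    γ.IsChain fun a b => (a, b) ∈ E :=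
  hγ.2.2.2

lemma IsPathFrom.exists_eq_cons {i : V} {γ : List V} (hγ : IsPathFrom E S i γ) :
    ∃ s ∈ S, ∃ l, γ = s :: l ∧ (s :: l).getLast (List.cons_ne_nil s l) = i := by
  obtain ⟨-, ⟨s, hs, hhead⟩, hlast, -⟩ := hγ
  obtain ⟨l, rfl⟩ := List.head?_eq_some_iff.1 hhead
  exact ⟨s, hs, l, rfl, by simpa [List.getLast?_eq_some_getLast] using hlast⟩

lemma IsPathFrom.append_singleton {γ : List V} {u v : V} (hγ : IsPathFrom E S u γ)
    (huv : (u, v) ∈ E) : IsPathFrom E S v (γ ++ [v]) := by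
  obtain ⟨hlen, ⟨s, hs, hhead⟩, hlast, hchain⟩ := hγ
  have hne : γ ≠ [] := by rintro rfl; simp at hlen
  refine ⟨by simp; omega, ⟨s, hs, by rwa [List.head?_append_of_ne_nil _ hne]⟩, by simp,
    isChain_iff_forall_mem_pathEdges.2 fun e he => ?_⟩
  rw [pathEdges_append_singleton v hlast, List.mem_append, List.mem_singleton] at he
  rcases he with he | rfl
  exacts [isChain_iff_forall_mem_pathEdges.1 hchain e he, huv]

end Paths

section PathWeights

omit [Fintype V] [DecidableEq V]

variable {E : Finset (V × V)} {p : V × V → ℝ} {S : Finset V} {i : V}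

lemma piStar_nonneg : 0 ≤ piStar E p S i := Real.sSup_nonneg' ⟨0, mem_insert _ _, le_rfl⟩

lemma piStar_le {x : ℝ} (hx : 0 ≤ x) (h : ∀ γ, IsPathFrom E S i γ → L p γ ≤ x) :
    piStar E p S i ≤ x :=
  csSup_le ⟨0, mem_insert _ _⟩ <| by
    rintro y (rfl | ⟨γ, hγ, rfl⟩)
    exacts [hx, h γ hγ]

lemma exists_path_of_lt_piStar {t : ℝ} (ht0 : 0 ≤ t) (ht : t < piStar E p S i) :
    ∃ γ, IsPathFrom E S i γ ∧ t < L p γ := by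
  obtain ⟨x, hx, htx⟩ := exists_lt_of_lt_csSup ⟨0, mem_insert _ _⟩ ht
  rcases hx with rfl | ⟨γ, hγ, rfl⟩
  exacts [absurd htx ht0.not_gt, ⟨γ, hγ, htx⟩]

variable (hp : ∀ e ∈ E, 0 ≤ p e ∧ p e ≤ 1)
include hp

lemma piStar_le_one : piStar E p S i ≤ 1 :=
  piStar_le zero_le_one fun _ hγ => L_le_one hp hγ.isChain

lemma L_le_piStar {γ : List V} (hγ : IsPathFrom E S i γ) : L p γ ≤ piStar E p S i := by
  refine le_csSup ⟨1, ?_⟩ (mem_insert_of_mem _ ⟨γ, hγ, rfl⟩)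
  rintro y (rfl | ⟨γ, hγ, rfl⟩)
  exacts [zero_le_one, L_le_one hp hγ.isChain]

end PathWeights

noncomputable def potential (E : Finset (V × V)) (p : V × V → ℝ) (S : Finset V) (u : V) :
    ℝ :=
  if u ∈ S then 1 else piStar E p S u

section Potential

omit [Fintype V]

variable {E : Finset (V × V)} {p : V × V → ℝ} {S : Finset V} {u v : V}

lemma potential_of_mem (hu : u ∈ S) : potential E p S u = 1 := if_pos hu

lemma potential_of_notMem (hu : u ∉ S) : potential E p S u = piStar E p S u := if_neg hu

lemma potential_nonneg (u : V) : 0 ≤ potential E p S u := by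
  by_cases hu : u ∈ S
  · exact (potential_of_mem hu).symm ▸ zero_le_one
  · exact (potential_of_notMem hu).symm ▸ piStar_nonneg

variable (hp : ∀ e ∈ E, 0 ≤ p e ∧ p e ≤ 1)
include hp

lemma potential_le_one (u : V) : potential E p S u ≤ 1 := by
  by_cases hu : u ∈ S
  · exact (potential_of_mem hu).le
  · exact (potential_of_notMem hu).trans_le (piStar_le_one hp)

/-- The Bellman inequality for the longest-path problem defining `π*`. -/
lemma potential_sub_le_potential (huv : (u, v) ∈ E) :
    potential E p S u - (1 - p (u, v)) ≤ potential E p S v := by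
  have hq : 0 ≤ 1 - p (u, v) := by linarith [(hp _ huv).2]
  by_cases hv : v ∈ S
  · rw [potential_of_mem hv]; linarith [potential_le_one hp (S := S) u]
  rw [potential_of_notMem hv]
  by_cases hu : u ∈ S
  · have hpath : IsPathFrom E S v [u, v] :=
      ⟨le_rfl, ⟨u, hu, rfl⟩, rfl, List.isChain_pair.2 huv⟩
    simpa [potential_of_mem hu, L] using L_le_piStar hp hpath
  · rw [potential_of_notMem hu, sub_le_iff_le_add]
    refine piStar_le (add_nonneg piStar_nonneg hq) fun γ hγ => ?_
    have := L_le_piStar hp (hγ.append_singleton huv)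
    rw [L_append_singleton v hγ.2.2.1] at this
    linarith

end Potential

def deadWindow (E : Finset (V × V)) (p : V × V → ℝ) (S : Finset V) (e : V × V) : Set ℝ :=
  Ico (max 0 (potential E p S e.1 - (1 - p e))) (max (1 - p e) (potential E p S e.1))

open Classical in
noncomputable def scenario (E : Finset (V × V)) (p : V × V → ℝ) (S : Finset V) (t : ℝ) :
    Finset (V × V) :=
  {e ∈ E | t ∉ deadWindow E p S e}

noncomputable def scenarioLaw (E : Finset (V × V)) (p : V × V → ℝ) (S : Finset V) :
    Measure (Finset (V × V)) :=
  (volume.restrict (Ico (0 : ℝ) 1)).map (scenario E p S)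

section Scenario

omit [Fintype V]

variable {E : Finset (V × V)} {p : V × V → ℝ} {S : Finset V} {t : ℝ}

lemma mem_scenario {e : V × V} :
    e ∈ scenario E p S t ↔ e ∈ E ∧ t ∉ deadWindow E p S e := by
  simp only [scenario, Finset.mem_filter]

lemma scenario_subset : scenario E p S t ⊆ E := fun _ he => (mem_scenario.1 he).1

lemma mem_scenario_iff_of_lt_potential (ht0 : 0 ≤ t) {u v : V}
    (ht : t < potential E p S u) :
    (u, v) ∈ scenario E p S t ↔ (u, v) ∈ E ∧ t < potential E p S u - (1 - p (u, v)) := by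
  have hlate : ¬ max (1 - p (u, v)) (potential E p S u) ≤ t := not_le.2 (lt_max_of_lt_right ht)
  rw [mem_scenario, deadWindow, mem_Ico, not_and_or, not_le, not_lt, or_iff_left hlate,
    lt_max_iff, or_iff_right ht0.not_gt]

lemma volume_deadWindow (e : V × V) :
    volume (deadWindow E p S e) = ENNReal.ofReal (1 - p e) := by
  rw [deadWindow, Real.volume_Ico]
  congr 1
  simp only [max_def]
  split_ifs <;> linarith

lemma measurableSet_deadWindow {e : V × V} : MeasurableSet (deadWindow E p S e) :=
  measurableSet_Ico

lemma measurable_scenario : Measurable (scenario E p S) := by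
  refine measurable_finset_iff.2 fun e => ?_
  simp_rw [mem_scenario]
  exact measurable_const.and (measurableSet_setOfPred.1 measurableSet_deadWindow.compl)

instance : IsProbabilityMeasure (volume.restrict (Ico (0 : ℝ) 1)) :=
  ⟨by simp⟩

instance : IsProbabilityMeasure (scenarioLaw E p S) :=
  Measure.isProbabilityMeasure_map measurable_scenario.aemeasurable

variable (hp : ∀ e ∈ E, 0 ≤ p e ∧ p e ≤ 1)
include hp

lemma deadWindow_subset_Ico {e : V × V} (he : e ∈ E) : deadWindow E p S e ⊆ Ico 0 1 :=
  Ico_subset_Ico (le_max_left _ _) (max_le (by linarith [(hp e he).1]) (potential_le_one hp _))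

lemma lt_potential_of_reflTransGen (ht0 : 0 ≤ t) {u v : V}
    (h : Relation.ReflTransGen (fun a b => (a, b) ∈ scenario E p S t) u v)
    (hu : t < potential E p S u) : t < potential E p S v := by
  induction h with
  | refl => exact hu
  | tail _ hwv ih =>
    have hlive := (mem_scenario_iff_of_lt_potential ht0 ih).1 hwv
    exact hlive.2.trans_le (potential_sub_le_potential hp hlive.1)

lemma reflTransGen_scenario_of_isChain (ht0 : 0 ≤ t) :
    ∀ (u : V) (l : List V), (u :: l).IsChain (fun a b => (a, b) ∈ E) →
      t < potential E p S u - (1 - L p (u :: l)) →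
      Relation.ReflTransGen (fun a b => (a, b) ∈ scenario E p S t) u
        ((u :: l).getLast (List.cons_ne_nil u l))
  | _, [], _, _ => .refl
  | u, v :: l, hc, ht => by
    rw [List.isChain_cons_cons] at hc
    rw [L_cons_cons] at ht
    have hL := L_le_one hp hc.2
    have hq : 0 ≤ 1 - p (u, v) := by linarith [(hp _ hc.1).2]
    have huv : (u, v) ∈ scenario E p S t :=
      (mem_scenario_iff_of_lt_potential ht0 (by linarith)).2 ⟨hc.1, by linarith⟩
    have hbellman := potential_sub_le_potential hp (S := S) hc.1
    exact .head huv (reflTransGen_scenario_of_isChain ht0 v l hc.2 (by linarith))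

lemma influenced_scenario_iff (ht0 : 0 ≤ t) (ht1 : t < 1) (i : V) :
    influenced (scenario E p S t) S i ↔ t < potential E p S i := by
  constructor
  · rintro ⟨s, hs, hsi⟩
    exact lt_potential_of_reflTransGen hp ht0 hsi (by rwa [potential_of_mem hs])
  · intro ht
    by_cases hi : i ∈ S
    · exact ⟨i, hi, .refl⟩
    rw [potential_of_notMem hi] at ht
    obtain ⟨γ, hγ, htγ⟩ := exists_path_of_lt_piStar ht0 ht
    obtain ⟨s, hs, l, rfl, hlast⟩ := hγ.exists_eq_cons
    refine ⟨s, hs, hlast ▸ reflTransGen_scenario_of_isChain hp ht0 s l hγ.isChain ?_⟩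
    rw [potential_of_mem hs]
    linarith

lemma scenarioLaw_mem (e : V × V) (he : e ∈ E) :
    (scenarioLaw E p S).real {c | e ∈ c} = p e := by
  have hW : (volume.restrict (Ico (0 : ℝ) 1)).real (deadWindow E p S e) = 1 - p e := by
    rw [measureReal_restrict_apply measurableSet_deadWindow,
      inter_eq_left.2 (deadWindow_subset_Ico hp he),
      measureReal_def, volume_deadWindow, ENNReal.toReal_ofReal (by linarith [(hp e he).2])]
  have hlive : scenario E p S ⁻¹' {c | e ∈ c} = (deadWindow E p S e)ᶜ := by
    ext t; simp [mem_scenario, he]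
  rw [scenarioLaw, map_measureReal_apply measurable_scenario (measurableSet_mem_finset e), hlive,
    measureReal_compl measurableSet_deadWindow, hW, probReal_univ]
  ring

end Scenario

section Expectation

omit [DecidableEq V]

variable {θ : Finset (V × V) → ℝ}

lemma prob_mono (hθ : ∀ c, 0 ≤ θ c) {A B : Finset (V × V) → Prop}
    (h : ∀ c, A c → B c) :
    prob θ A ≤ prob θ B :=
  Finset.sum_le_sum fun c _ => by
    by_cases hA : A c
    · simp [hA, h c hA]
    · by_cases hB : B c <;> simp [hA, hB, hθ c]

open Classical in
lemma R_eq_sum_ite (c : Finset (V × V)) (S : Finset V) :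
    (R c S : ℝ) = ∑ i, if influenced c S i then 1 else 0 := by
  rw [R, Set.ncard_eq_toFinset_card', Set.toFinset_ofPred, Finset.card_filter]
  push_cast
  rfl

lemma expInf_eq_sum_prob (θ : Finset (V × V) → ℝ) (S : Finset V) :
    expInf θ S = ∑ i, prob θ (fun c => influenced c S i) := by
  classical
  simp only [expInf, prob, R_eq_sum_ite, Finset.mul_sum, mul_ite, mul_one, mul_zero]
  exact Finset.sum_comm

lemma expInf_measureReal_singleton (ν : Measure (Finset (V × V))) [IsFiniteMeasure ν]
    (S : Finset V) : expInf (fun c => ν.real {c}) S = ∫ c, (R c S : ℝ) ∂ν := by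
  rw [integral_fintype .of_finite, expInf]
  rfl

end Expectation

section LowerBound

variable {E : Finset (V × V)} {p : V × V → ℝ} {S : Finset V} {θ : Finset (V × V) → ℝ}

lemma prob_true (hθ : memTheta E p θ) : prob θ (fun _ => True) = 1 := by
  simpa [prob] using hθ.2.2.1

lemma prob_mem (hθ : memTheta E p θ) {e : V × V} (he : e ∈ E) : prob θ (e ∈ ·) = p e := by
  rw [← hθ.2.2.2 e he, prob]
  congr!

lemma add_prob_sub_one_le_prob_and (hθ : memTheta E p θ) (A B : Finset (V × V) → Prop) :
    prob θ A + prob θ B - 1 ≤ prob θ (fun c => A c ∧ B c) := by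
  rw [← prob_true hθ, prob, prob, prob, prob, ← Finset.sum_add_distrib,
    ← Finset.sum_sub_distrib]
  refine Finset.sum_le_sum fun c _ => ?_
  by_cases hA : A c <;> by_cases hB : B c <;> simp [hA, hB, hθ.1 c]

lemma one_sub_sum_le_prob_forall_mem (hθ : memTheta E p θ) :
    ∀ l : List (V × V), (∀ e ∈ l, e ∈ E) →
      1 - (l.map fun e => 1 - p e).sum ≤ prob θ (fun c => ∀ e ∈ l, e ∈ c)
  | [], _ => by simp [prob_true hθ]
  | e :: l, hl => by
    have ih := one_sub_sum_le_prob_forall_mem hθ l fun e' he' => hl e' (List.mem_cons_of_mem _ he')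
    have hand := add_prob_sub_one_le_prob_and hθ (e ∈ ·) (fun c => ∀ e ∈ l, e ∈ c)
    rw [prob_mem hθ (hl e List.mem_cons_self)] at hand
    simp only [List.forall_mem_cons, List.map_cons, List.sum_cons]
    linarith

lemma L_le_prob_influenced (hθ : memTheta E p θ) {i : V} {γ : List V}
    (hγ : IsPathFrom E S i γ) : L p γ ≤ prob θ (fun c => influenced c S i) := by
  obtain ⟨s, hs, l, rfl, hlast⟩ := hγ.exists_eq_cons
  refine (one_sub_sum_le_prob_forall_mem hθ _
    fun e he => isChain_iff_forall_mem_pathEdges.1 hγ.isChain e he).trans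
    (prob_mono hθ.1 fun c hc => ⟨s, hs, ?_⟩)
  exact List.relationReflTransGen_of_exists_isChain_cons _
    (isChain_iff_forall_mem_pathEdges.2 hc) hlast

lemma potential_le_prob_influenced (hθ : memTheta E p θ) (i : V) :
    potential E p S i ≤ prob θ (fun c => influenced c S i) := by
  by_cases hi : i ∈ S
  · rw [potential_of_mem hi, ← prob_true hθ]
    exact prob_mono hθ.1 fun _ _ => ⟨i, hi, .refl⟩
  · rw [potential_of_notMem hi]
    exact piStar_le (Finset.sum_nonneg fun c _ => by split_ifs <;> simp [hθ.1 c])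
      fun γ hγ => L_le_prob_influenced hθ hγ

lemma sum_potential_le_expInf (hθ : memTheta E p θ) :
    ∑ i, potential E p S i ≤ expInf θ S := by
  rw [expInf_eq_sum_prob]
  exact Finset.sum_le_sum fun i _ => potential_le_prob_influenced hθ i

lemma sum_potential :
    ∑ i, potential E p S i = S.card + ∑ i ∈ Finset.univ \ S, piStar E p S i := by
  rw [← Finset.sum_sdiff (Finset.subset_univ S), add_comm,
    Finset.sum_congr rfl fun i hi => potential_of_mem hi, Finset.sum_const, nsmul_one]
  exact congrArg _ (Finset.sum_congr rfl fun i hi => potential_of_notMem (Finset.mem_sdiff.1 hi).2)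

end LowerBound

lemma memTheta_measureReal_singleton {E : Finset (V × V)} {p : V × V → ℝ}
    (ν : Measure (Finset (V × V))) [IsProbabilityMeasure ν] (hsupp : ∀ᵐ c ∂ν, c ⊆ E)
    (hmarg : ∀ e ∈ E, ν.real {c | e ∈ c} = p e) :
    memTheta E p (fun c => ν.real {c}) := by
  refine ⟨fun _ => measureReal_nonneg, fun c hc => ?_, ?_, fun e he => ?_⟩
  · by_contra hcE
    exact hc ((measureReal_eq_zero_iff).2 (measure_mono_null (by simpa using hcE) (ae_iff.1 hsupp)))
  · rw [sum_measureReal_singleton, Finset.coe_univ, probReal_univ]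
  · rw [← Finset.sum_filter, sum_measureReal_singleton, ← hmarg e he]
    simp

noncomputable def thetaStar (E : Finset (V × V)) (p : V × V → ℝ) (S : Finset V)
    (c : Finset (V × V)) : ℝ :=
  (scenarioLaw E p S).real {c}

section Minimizer

variable {E : Finset (V × V)} {p : V × V → ℝ} {S : Finset V}

variable (hp : ∀ e ∈ E, 0 ≤ p e ∧ p e ≤ 1)
include hp

lemma memTheta_thetaStar : memTheta E p (thetaStar E p S) :=
  memTheta_measureReal_singleton _
    ((ae_map_iff measurable_scenario.aemeasurable (.of_discrete)).2
      (.of_forall fun _ => scenario_subset)) (scenarioLaw_mem hp)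

lemma expInf_thetaStar : expInf (thetaStar E p S) S = ∑ i, potential E p S i := by
  classical
  have hR : EqOn (fun t => (R (scenario E p S t) S : ℝ))
      (fun t => ∑ i, (Iio (potential E p S i)).indicator 1 t) (Ico 0 1) := fun t ht => by
    simp only [R_eq_sum_ite, influenced_scenario_iff hp ht.1 ht.2, indicator, mem_Iio, Pi.one_apply]
  unfold thetaStar
  rw [expInf_measureReal_singleton, scenarioLaw,
    integral_map measurable_scenario.aemeasurable .of_discrete,
    setIntegral_congr_fun measurableSet_Ico hR,
    integral_finsetSum _ fun i _ => (integrable_const 1).indicator measurableSet_Iio]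
  refine Finset.sum_congr rfl fun i _ => ?_
  rw [integral_indicator_one measurableSet_Iio, measureReal_restrict_apply measurableSet_Iio,
    inter_comm, Ico_inter_Iio, min_eq_right (potential_le_one hp i),
    Real.volume_real_Ico_of_le (potential_nonneg i), sub_zero]

end Minimizer

/-- for every seed set `S` there is a distribution `θ* ∈ Θ` with
`E_{θ*}[R(c̃, S)] = |S| + ∑_{i ∈ V \ S} π*_i`; consequently
`f^corr(S) = |S| + ∑_{i ∈ V \ S} π*_i`. -/
theorem exists_minimizer_and_fcorr_eq (E : Finset (V × V)) (p : V × V → ℝ)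
    (hp : ∀ e ∈ E, 0 ≤ p e ∧ p e ≤ 1) (S : Finset V) :
    (∃ θs : Finset (V × V) → ℝ, memTheta E p θs ∧
        expInf θs S = (S.card : ℝ) + ∑ i ∈ Finset.univ \ S, piStar E p S i) ∧
      fcorr E p S = (S.card : ℝ) + ∑ i ∈ Finset.univ \ S, piStar E p S i := by
  rw [← sum_potential]
  have hmin :
      IsLeast {x | ∃ θ, memTheta E p θ ∧ x = expInf θ S} (∑ i, potential E p S i) :=
    ⟨⟨thetaStar E p S, memTheta_thetaStar hp, (expInf_thetaStar hp).symm⟩,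
      by rintro _ ⟨θ, hθ, rfl⟩; exact sum_potential_le_expInf hθ⟩
  exact ⟨⟨thetaStar E p S, memTheta_thetaStar hp, expInf_thetaStar hp⟩, hmin.csInf_eq⟩

end CorrIM
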